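/- For every x ∈ ℝ with sin(x/2) ≠ 0, the following Fourier expansion holds, with the series converging absolutely: ln(4 sin²(x/2)) · sin x = (1/2) sin x − 2 ∑_{m=2}^{∞} sin(mx)/(m² − 1). -/

import Mathlib

open Complex Filter Topology

noncomputable def auxG (z : ℂ) : ℂ :=
  (1 / 2) * ((z⁻¹ - z) * Complex.log (1 - z) + 1 + z / 2)

lemma aux_hasSum_G {z : ℂ} (hz : ‖z‖ < 1) (hz0 : z ≠ 0) :
    HasSum (fun m : ℕ => z ^ (m + 2) / (((m : ℂ) + 2) ^ 2 - 1)) (auxG z) := by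
  have L := Complex.hasSum_taylorSeries_neg_log hz
  have hA' : HasSum (fun n : ℕ => z ^ (n + 1) / ((n : ℂ) + 1))
      (-Complex.log (1 - z) - ∑ i ∈ Finset.range 1, z ^ i / (i : ℂ)) := by
    have := (hasSum_nat_add_iff' (f := fun n : ℕ => z ^ n / (n : ℂ)) 1).mpr L
    convert this using 2 with n
    · rfl
    push_cast; ring
  have hB' : HasSum (fun n : ℕ => z ^ (n + 3) / ((n : ℂ) + 3))
      (-Complex.log (1 - z) - ∑ i ∈ Finset.range 3, z ^ i / (i : ℂ)) := by
    have := (hasSum_nat_add_iff' (f := fun n : ℕ => z ^ n / (n : ℂ)) 3).mpr L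
    convert this using 2 with n
    · rfl
    push_cast; ring
  have key := ((hA'.mul_left z).sub (hB'.mul_left z⁻¹)).mul_left (1 / 2 : ℂ)
  convert key using 1
  · rfl
  · funext m
    have h1 : ((m : ℂ) + 1) ≠ 0 := Nat.cast_add_one_ne_zero m
    have h3 : ((m : ℂ) + 3) ≠ 0 := by
      have h : (((m + 3 : ℕ) : ℂ)) ≠ 0 := Nat.cast_ne_zero.mpr (by omega)
      push_cast at h
      exact h
    have h2 : (((m : ℂ) + 2) ^ 2 - 1) = ((m : ℂ) + 1) * ((m : ℂ) + 3) := by ring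
    rw [h2]
    field_simp
    ring
  · have hsum1 : ∑ i ∈ Finset.range 1, z ^ i / (i : ℂ) = 0 := by
      simp
    have hsum3 : ∑ i ∈ Finset.range 3, z ^ i / (i : ℂ) = z + z ^ 2 / 2 := by
      rw [Finset.sum_range_succ, Finset.sum_range_succ, Finset.sum_range_one]
      norm_num
    rw [hsum1, hsum3, auxG]
    have hzz : z⁻¹ * z = 1 := inv_mul_cancel₀ hz0
    field_simp
    ring

theorem stmt8 (x : ℝ) (hx : Real.sin (x / 2) ≠ 0) :
    Summable (fun m : ℕ => Real.sin (((m : ℝ) + 2) * x) / (((m : ℝ) + 2) ^ 2 - 1)) ∧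
    Real.log (4 * Real.sin (x / 2) ^ 2) * Real.sin x
      = (1 / 2) * Real.sin x
        - 2 * ∑' m : ℕ, Real.sin (((m : ℝ) + 2) * x) / (((m : ℝ) + 2) ^ 2 - 1) := by
  set z₀ : ℂ := Complex.exp (x * Complex.I) with hz₀def
  have hz₀ne : z₀ ≠ 0 := Complex.exp_ne_zero _
  have hnorm : ‖z₀‖ = 1 := by
    rw [hz₀def, Complex.norm_exp_ofReal_mul_I]
  have hz₀re : z₀.re = Real.cos x := Complex.exp_ofReal_mul_I_re x
  have hz₀im : z₀.im = Real.sin x := Complex.exp_ofReal_mul_I_im x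
  -- cos x in terms of sin (x/2)
  have hcos : Real.cos x = 1 - 2 * Real.sin (x / 2) ^ 2 := by
    have h1 : Real.cos (2 * (x / 2)) = Real.cos (x / 2) ^ 2 - Real.sin (x / 2) ^ 2 :=
      Real.cos_two_mul' _
    have h2 := Real.sin_sq_add_cos_sq (x / 2)
    have h3 : 2 * (x / 2) = x := by ring
    rw [h3] at h1
    linarith
  have hsq : 0 < Real.sin (x / 2) ^ 2 :=
    lt_of_le_of_ne (sq_nonneg _) (Ne.symm (pow_ne_zero 2 hx))
  have hcoslt : Real.cos x < 1 := by linarith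
  -- 1 - z₀ is in the slit plane
  have hslit : (1 - z₀) ∈ Complex.slitPlane := by
    rw [Complex.mem_slitPlane_iff]
    left
    simp [Complex.sub_re, hz₀re]
    linarith
  have h1z₀ : (1 : ℂ) - z₀ ≠ 0 := Complex.slitPlane_ne_zero hslit
  -- |1 - z₀|² = 4 sin²(x/2)
  have habs : (‖1 - z₀‖) ^ 2 = 4 * Real.sin (x / 2) ^ 2 := by
    rw [Complex.sq_norm, Complex.normSq_apply]
    simp only [Complex.sub_re, Complex.sub_im, Complex.one_re, Complex.one_im, hz₀re, hz₀im]
    have h2 := Real.sin_sq_add_cos_sq x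
    nlinarith
  -- summable bound
  have hb : Summable (fun m : ℕ => 1 / (((m : ℝ) + 2) ^ 2 - 1)) := by
    have h1 : Summable (fun n : ℕ => 1 / ((n : ℝ)) ^ 2) :=
      Real.summable_one_div_nat_pow.mpr one_lt_two
    have h2 : Summable (fun n : ℕ => 1 / (((n : ℝ) + 1)) ^ 2) := by
      have := (summable_nat_add_iff (f := fun n : ℕ => 1 / ((n : ℝ)) ^ 2) 1).mpr h1
      convert this using 2 with n
      · rfl
      push_cast; ring
    refine h2.of_nonneg_of_le (fun m => ?_) (fun m => ?_)
    · have hm : (0 : ℝ) ≤ m := Nat.cast_nonneg m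
      have hp : (0 : ℝ) < ((m : ℝ) + 2) ^ 2 - 1 := by nlinarith
      positivity
    · have hm : (0 : ℝ) ≤ m := Nat.cast_nonneg m
      apply one_div_le_one_div_of_le
      · positivity
      · nlinarith
  -- norm bound for terms
  have hbound : ∀ (z : ℂ), ‖z‖ ≤ 1 → ∀ m : ℕ,
      ‖z ^ (m + 2) / (((m : ℂ) + 2) ^ 2 - 1)‖ ≤ 1 / (((m : ℝ) + 2) ^ 2 - 1) := by
    intro z hz m
    have hm : (0 : ℝ) ≤ m := Nat.cast_nonneg m
    have hden : (((m : ℂ) + 2) ^ 2 - 1) = ((((m : ℝ) + 2) ^ 2 - 1 : ℝ) : ℂ) := by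
      push_cast; ring
    rw [norm_div, hden, Complex.norm_real, norm_pow]
    have hpos : (0 : ℝ) < ((m : ℝ) + 2) ^ 2 - 1 := by nlinarith
    rw [Real.norm_of_nonneg hpos.le]
    gcongr
    calc ‖z‖ ^ (m + 2) ≤ 1 ^ (m + 2) := pow_le_pow_left₀ (norm_nonneg z) hz _
      _ = 1 := one_pow _
  -- summability of the boundary complex series
  have hS : Summable (fun m : ℕ => z₀ ^ (m + 2) / (((m : ℂ) + 2) ^ 2 - 1)) :=
    Summable.of_norm_bounded hb (hbound z₀ hnorm.le)
  -- the limit identity: tsum at boundary = auxG z₀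
  have heq : (∑' m : ℕ, z₀ ^ (m + 2) / (((m : ℂ) + 2) ^ 2 - 1)) = auxG z₀ := by
    have hIoo : Set.Ioo (0 : ℝ) 1 ∈ 𝓝[<] (1 : ℝ) :=
      Ioo_mem_nhdsLT_of_mem ⟨zero_lt_one, le_refl 1⟩
    have hlim1 : Tendsto (fun r : ℝ => ∑' m : ℕ,
        (((r : ℂ) * z₀) ^ (m + 2) / (((m : ℂ) + 2) ^ 2 - 1))) (𝓝[<] (1 : ℝ))
        (𝓝 (∑' m : ℕ, z₀ ^ (m + 2) / (((m : ℂ) + 2) ^ 2 - 1))) := by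
      apply tendsto_tsum_of_dominated_convergence hb
      · intro k
        have hc : Continuous fun r : ℝ =>
            ((r : ℂ) * z₀) ^ (k + 2) / (((k : ℂ) + 2) ^ 2 - 1) := by
          apply Continuous.div_const
          exact (Complex.continuous_ofReal.mul continuous_const).pow _
        have := hc.tendsto 1
        simp only [Complex.ofReal_one, one_mul] at this
        exact this.mono_left nhdsWithin_le_nhds
      · filter_upwards [hIoo] with r hr k
        apply hbound
        rw [norm_mul, hnorm, mul_one, Complex.norm_real, Real.norm_of_nonneg hr.1.le]
        exact hr.2.le
    have hlim2 : Tendsto (fun r : ℝ => auxG ((r : ℂ) * z₀)) (𝓝[<] (1 : ℝ)) (𝓝 (auxG z₀)) := by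
      have hcont : ContinuousAt auxG z₀ := by
        unfold auxG
        apply ContinuousAt.mul continuousAt_const
        apply ContinuousAt.add
        apply ContinuousAt.add
        · exact ((continuousAt_inv₀ hz₀ne).sub continuousAt_id).mul
            ((continuousAt_clog hslit).comp
              ((continuous_const.sub continuous_id).continuousAt))
        · exact continuousAt_const
        · exact continuousAt_id.div_const _
      have hmap : Tendsto (fun r : ℝ => (r : ℂ) * z₀) (𝓝[<] (1 : ℝ)) (𝓝 z₀) := by
        have hc : Continuous fun r : ℝ => (r : ℂ) * z₀ :=
          Complex.continuous_ofReal.mul continuous_const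
        have := hc.tendsto 1
        simp only [Complex.ofReal_one, one_mul] at this
        exact this.mono_left nhdsWithin_le_nhds
      exact hcont.tendsto.comp hmap
    have hev : (fun r : ℝ => auxG ((r : ℂ) * z₀)) =ᶠ[𝓝[<] (1 : ℝ)]
        (fun r : ℝ => ∑' m : ℕ, (((r : ℂ) * z₀) ^ (m + 2) / (((m : ℂ) + 2) ^ 2 - 1))) := by
      filter_upwards [hIoo] with r hr
      refine ((aux_hasSum_G ?_ ?_).tsum_eq).symm
      · rw [norm_mul, hnorm, mul_one, Complex.norm_real, Real.norm_of_nonneg hr.1.le]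
        exact hr.2
      · exact mul_ne_zero (Complex.ofReal_ne_zero.mpr hr.1.ne') hz₀ne
    exact tendsto_nhds_unique hlim1 (hlim2.congr' hev)
  -- imaginary parts of the terms
  have hterm : ∀ m : ℕ, (z₀ ^ (m + 2) / (((m : ℂ) + 2) ^ 2 - 1)).im
      = Real.sin (((m : ℝ) + 2) * x) / (((m : ℝ) + 2) ^ 2 - 1) := by
    intro m
    have hpow : z₀ ^ (m + 2) = Complex.exp (((((m : ℝ) + 2) * x : ℝ)) * Complex.I) := by
      rw [hz₀def, ← Complex.exp_nat_mul]
      congr 1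
      push_cast; ring
    have hden : (((m : ℂ) + 2) ^ 2 - 1) = ((((m : ℝ) + 2) ^ 2 - 1 : ℝ) : ℂ) := by
      push_cast; ring
    rw [hpow, hden, Complex.div_ofReal_im, Complex.exp_ofReal_mul_I_im]
  have him : HasSum (fun m : ℕ => Real.sin (((m : ℝ) + 2) * x) / (((m : ℝ) + 2) ^ 2 - 1))
      (auxG z₀).im := by
    have := Complex.hasSum_im hS.hasSum
    rw [heq] at this
    have hfun : (fun m : ℕ => (z₀ ^ (m + 2) / (((m : ℂ) + 2) ^ 2 - 1)).im)
        = fun m : ℕ => Real.sin (((m : ℝ) + 2) * x) / (((m : ℝ) + 2) ^ 2 - 1) := funext hterm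
    rw [hfun] at this
    exact this
  -- compute (auxG z₀).im
  have hinv : z₀⁻¹ = Complex.exp (((-x : ℝ)) * Complex.I) := by
    rw [hz₀def, ← Complex.exp_neg]
    congr 1
    push_cast; ring
  have hinv_re : (z₀⁻¹).re = Real.cos x := by
    rw [hinv, Complex.exp_ofReal_mul_I_re, Real.cos_neg]
  have hinv_im : (z₀⁻¹).im = -Real.sin x := by
    rw [hinv, Complex.exp_ofReal_mul_I_im, Real.sin_neg]
  have hgim : (auxG z₀).im
      = 1 / 2 * ((-2 * Real.sin x) * Real.log (‖1 - z₀‖) + Real.sin x / 2) := by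
    have hre0 : (z₀⁻¹ - z₀).re = 0 := by
      rw [Complex.sub_re, hinv_re, hz₀re]; ring
    have him0 : (z₀⁻¹ - z₀).im = -2 * Real.sin x := by
      rw [Complex.sub_im, hinv_im, hz₀im]; ring
    have h2im : (z₀ / 2).im = Real.sin x / 2 := by
      rw [show (2 : ℂ) = ((2 : ℝ) : ℂ) by norm_num, Complex.div_ofReal_im, hz₀im]
    have hW : auxG z₀ = ((1 / 2 : ℝ) : ℂ) *
        ((z₀⁻¹ - z₀) * Complex.log (1 - z₀) + 1 + z₀ / 2) := by
      rw [auxG]; norm_num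
    rw [hW, Complex.im_ofReal_mul, Complex.add_im, Complex.add_im, Complex.mul_im,
      hre0, him0, h2im, Complex.one_im, Complex.log_re]
    ring
  have hlog4 : Real.log (4 * Real.sin (x / 2) ^ 2) = 2 * Real.log (‖1 - z₀‖) := by
    rw [← habs, Real.log_pow]
    norm_num
  refine ⟨him.summable, ?_⟩
  rw [him.tsum_eq, hgim, hlog4]
  ring
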